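/- Let A : H1 → H2 be nonzero bounded linear, V : H2 → H2 a cutter with R(A) ∩ Fix V ≠ ∅, let u ∈ H1 and let τ be the maximal extrapolation functional. Then the half-space H := {z ∈ H1 : ⟨u − L_τ{V}(u), z − L_τ{V}(u)⟩ ≤ 0} satisfies H = {z ∈ H1 : ⟨Au − V(Au), Az − V(Au)⟩ ≤ 0} = A^{-1}({w ∈ H2 : ⟨Au − V(Au), w − V(Au)⟩ ≤ 0}). -/

import Mathlib

open scoped Classical

/-- `U` is `ρ`-strongly quasi-nonexpansive. -/
def IsSQNE {H : Type*} [NormedAddCommGroup H] [InnerProductSpace ℝ H]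
    (U : H → H) (ρ : ℝ) : Prop :=
  ∀ x : H, ∀ z ∈ Function.fixedPoints U, ‖U x - z‖ ^ 2 ≤ ‖x - z‖ ^ 2 - ρ * ‖U x - x‖ ^ 2

variable {H1 H2 : Type*} [NormedAddCommGroup H1] [InnerProductSpace ℝ H1]
  [NormedAddCommGroup H2] [InnerProductSpace ℝ H2] [CompleteSpace H1] [CompleteSpace H2]

/-- The extrapolated Landweber operator corresponding to `V` and the
extrapolation functional `σ`. -/
noncomputable def Landweber (A : H1 →L[ℝ] H2) (σ : H1 → ℝ) (V : H2 → H2) : H1 → H1 :=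
  fun x => x + (σ x / ‖A‖ ^ 2) • (ContinuousLinearMap.adjoint A) (V (A x) - A x)

/-- The maximal extrapolation functional `τ`. -/
noncomputable def tauFun (A : H1 →L[ℝ] H2) (V : H2 → H2) : H1 → ℝ :=
  fun x =>
    if V (A x) ≠ A x then
      (‖A‖ * ‖V (A x) - A x‖ / ‖(ContinuousLinearMap.adjoint A) (V (A x) - A x)‖) ^ 2
    else 1

/-- `T` is a cutter. -/
def IsCutter {H : Type*} [NormedAddCommGroup H] [InnerProductSpace ℝ H]
    (T : H → H) : Prop :=
  ∀ x : H, ∀ z ∈ Function.fixedPoints T, inner ℝ (z - T x) (x - T x) ≤ (0 : ℝ)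

theorem stmt17 (A : H1 →L[ℝ] H2) (hA : A ≠ 0) (V : H2 → H2) (hV : IsCutter V)
    (hfix : (Set.range A ∩ Function.fixedPoints V).Nonempty) (u : H1) :
    {z : H1 | inner ℝ (u - Landweber A (tauFun A V) V u)
        (z - Landweber A (tauFun A V) V u) ≤ (0 : ℝ)} =
      {z : H1 | inner ℝ (A u - V (A u)) (A z - V (A u)) ≤ (0 : ℝ)} ∧
    {z : H1 | inner ℝ (A u - V (A u)) (A z - V (A u)) ≤ (0 : ℝ)} =
      A ⁻¹' {w : H2 | inner ℝ (A u - V (A u)) (w - V (A u)) ≤ (0 : ℝ)} := by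
  

  constructor
  · ext z
    simp only [Set.mem_setOf_eq]
    set d := V (A u) - A u with hd
    by_cases hdz : d = 0
    · have h1 : V (A u) = A u := by rwa [← sub_eq_zero]
      simp [Landweber, hd, hdz, h1]
    · -- A* d ≠ 0
      set a := (ContinuousLinearMap.adjoint A) d with ha
      have hVne : V (A u) ≠ A u := fun h => hdz (by rw [hd, h, sub_self])
      have haz : a ≠ 0 := by
        intro h0
        obtain ⟨w, ⟨q, hq⟩, hw⟩ := hfix
        have hcut := hV (A u) w hw
        have h1 : (inner ℝ d (w - A u) : ℝ) = 0 := by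
          have : (inner ℝ (q - u) a : ℝ) = 0 := by rw [h0, inner_zero_right]
          rw [ha, ContinuousLinearMap.adjoint_inner_right, map_sub, hq] at this
          rw [real_inner_comm]; exact this
        have h2 : (inner ℝ (w - V (A u)) (A u - V (A u)) : ℝ)
            = -(inner ℝ d (w - A u) : ℝ) + ‖d‖ ^ 2 := by
          have : w - V (A u) = (w - A u) - d := by rw [hd]; abel
          rw [this]
          have : A u - V (A u) = -d := by rw [hd]; abel
          rw [this, inner_neg_right, inner_sub_left, real_inner_self_eq_norm_sq,
            real_inner_comm d (w - A u)]
          ring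
        rw [h2, h1] at hcut
        have : (0:ℝ) < ‖d‖ ^ 2 := pow_pos (norm_pos_iff.mpr hdz) 2
        nlinarith
      have hAn : ‖A‖ ≠ 0 := norm_ne_zero_iff.mpr hA
      have han : ‖a‖ ≠ 0 := norm_ne_zero_iff.mpr haz
      have hc' : tauFun A V u / ‖A‖ ^ 2 = ‖d‖ ^ 2 / ‖a‖ ^ 2 := by
        rw [tauFun]
        simp only [hVne, ne_eq, not_false_eq_true, if_true, ← hd, ← ha]
        field_simp
      set c : ℝ := ‖d‖ ^ 2 / ‖a‖ ^ 2 with hc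
      have hcpos : 0 < c :=
        div_pos (pow_pos (norm_pos_iff.mpr hdz) 2) (pow_pos (norm_pos_iff.mpr haz) 2)
      have hca : c * ‖a‖ ^ 2 = ‖d‖ ^ 2 := by
        rw [hc]; field_simp
      have key : (inner ℝ (u - Landweber A (tauFun A V) V u)
          (z - Landweber A (tauFun A V) V u) : ℝ)
          = c * inner ℝ (A u - V (A u)) (A z - V (A u)) := by
        have hL : Landweber A (tauFun A V) V u = u + c • a := by
          rw [Landweber, ← hd, ← ha, hc', hc]
        rw [hL]
        have e1 : u - (u + c • a) = -(c • a) := by abel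
        have e2 : z - (u + c • a) = (z - u) - c • a := by abel
        have e4 : A u - V (A u) = -d := by rw [hd]; abel
        have e5 : A z - V (A u) = (A z - A u) - d := by rw [hd]; abel
        have hips : (inner ℝ a a : ℝ) = ‖a‖ ^ 2 := real_inner_self_eq_norm_sq a
        have hipd : (inner ℝ d d : ℝ) = ‖d‖ ^ 2 := real_inner_self_eq_norm_sq d
        have hz : (inner ℝ a z : ℝ) = inner ℝ d (A z) := by
          rw [ha, ContinuousLinearMap.adjoint_inner_left]
        have hu : (inner ℝ a u : ℝ) = inner ℝ d (A u) := by
          rw [ha, ContinuousLinearMap.adjoint_inner_left]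
        rw [e1, e2, e4, e5]
        simp only [inner_neg_left, inner_sub_right, inner_sub_left, inner_smul_left,
          inner_smul_right, conj_trivial, hips, hipd, hz, hu]
        nlinarith [hca]
      rw [key]
      constructor
      · intro h; nlinarith
      · intro h; nlinarith
  · rfl
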